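/- For all m ∈ ℤ and n ≥ 1 the following relations hold in the field F̃: (ZY) Z_n·Y_m = Y_{m−n} + Y_{m+n} + Σ_{k=1}^{n} k·q_⟨m+k⟩·Z_{n−k}; and (YY) Y_m·Y_{m+n} = Y_{⌊m+n/2⌋}·Y_{⌈m+n/2⌉} + Σ_{k=1}^{n−1} min(k, n−k)·q_⟨m+k⟩·Y_{m+n−k} + Σ_{k≥1} c_k·Z_{n−1−k} (a finite sum), where c_{2p} = (p(p+1)(2p+1)/6)·q₁q₂ and c_{2p−1} = ((p−1)p(p+1)/6)·(q₁² + q₂²) + p for p ≥ 1. -/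

import Mathlib

open MvPolynomial Finset

noncomputable section

/-- The ambient field `F̃ = ℚ(q₁, q₂, Y₁, Y₂)`. -/
abbrev Ft : Type := FractionRing (MvPolynomial (Fin 4) ℚ)

/-- The four independent indeterminates of `F̃`; `q₁ = genT 0`, `q₂ = genT 1`,
`Y₁ = genT 2`, `Y₂ = genT 3`. -/
def genT (i : Fin 4) : Ft := algebraMap (MvPolynomial (Fin 4) ℚ) Ft (X i)

/-- `q_⟨j⟩ = q₁` if `j` is odd and `q₂` if `j` is even. -/
def qq (j : ℤ) : Ft := if Odd j then genT 0 else genT 1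

/-- `Y : ℤ → Ft` is the family of deformed cluster variables: `Y 1, Y 2` are the two
indeterminates `Y₁, Y₂` and the deformed exchange relations hold. -/
def IsDefSeq (Y : ℤ → Ft) : Prop :=
  Y 1 = genT 2 ∧ Y 2 = genT 3 ∧
    ∀ m : ℤ, Y (m - 1) * Y (m + 1) = Y m ^ 2 + qq m * Y m + 1

/-- `Z = Y₀Y₃ - (Y₁ + q₁)(Y₂ + q₂)`. -/
def Zel (Y : ℤ → Ft) : Ft := Y 0 * Y 3 - (Y 1 + genT 0) * (Y 2 + genT 1)

/-- Normalized Chebyshev polynomials: `T₀ = 1`, `T₁ = t`, `T₂ = t² - 2`,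
`T_{n+1} = t T_n - T_{n-1}` for `n ≥ 2`, so `T_n(t + t⁻¹) = tⁿ + t⁻ⁿ` for `n ≥ 1`. -/
def cheb : ℕ → Polynomial ℤ
  | 0 => 1
  | 1 => Polynomial.X
  | 2 => Polynomial.X ^ 2 - 2
  | n + 3 => Polynomial.X * cheb (n + 2) - cheb (n + 1)

/-- `Z_n = T_n(Z)` (so `Z_0 = 1`). -/
def Zn (Y : ℤ → Ft) (n : ℕ) : Ft := Polynomial.aeval (Zel Y) (cheb n)

/-- `Z_j` for integer index, with the convention `Z_j = 0` for `j < 0`. -/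
def ZnI (Y : ℤ → Ft) (j : ℤ) : Ft := if j < 0 then 0 else Zn Y j.toNat

/-- The coefficients `c_k`: `c_{2p} = (p(p+1)(2p+1)/6)·q₁q₂` and
`c_{2p-1} = ((p-1)p(p+1)/6)·(q₁² + q₂²) + p`. -/
def ck (k : ℕ) : Ft :=
  if k % 2 = 0 then
    (((k / 2 : ℕ) : Ft) * (((k / 2 : ℕ) : Ft) + 1) * (2 * ((k / 2 : ℕ) : Ft) + 1) / 6) *
      genT 0 * genT 1
  else
    (((((k + 1) / 2 : ℕ) : Ft) - 1) * (((k + 1) / 2 : ℕ) : Ft) *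
          ((((k + 1) / 2 : ℕ) : Ft) + 1) / 6) * (genT 0 ^ 2 + genT 1 ^ 2) +
      (((k + 1) / 2 : ℕ) : Ft)

set_option maxHeartbeats 2000000

abbrev RR := MvPolynomial (Fin 4) ℚ

lemma algMap_ne_zero {f : RR} (h : f ≠ 0) : algebraMap RR Ft f ≠ 0 := by
  intro h0
  exact h (IsFractionRing.injective RR Ft (by simpa using h0))

def pt : Fin 4 → ℚ := ![0, 0, 1, 1]

def PosF (y : Ft) : Prop :=
  ∃ f g : RR, 0 < eval pt f ∧ 0 < eval pt g ∧ y * algebraMap RR Ft g = algebraMap RR Ft f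

lemma PosF.ne_zero {y : Ft} (h : PosF y) : y ≠ 0 := by
  obtain ⟨f, g, hf, hg, he⟩ := h
  intro h0
  rw [h0, zero_mul] at he
  have hfne : f ≠ 0 := fun hf0 => by simp [hf0] at hf
  exact algMap_ne_zero hfne he.symm

lemma qq_cases (j : ℤ) : qq j = genT 0 ∨ qq j = genT 1 := by
  unfold qq; split <;> simp

lemma PosF.step {a b c q : Ft} (hq : q = genT 0 ∨ q = genT 1)
    (ha : PosF a) (hb : PosF b) (h : a * c = b ^ 2 + q * b + 1) : PosF c := by
  obtain ⟨fa, ga, hfa, hga, hea⟩ := ha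
  obtain ⟨fb, gb, hfb, hgb, heb⟩ := hb
  obtain ⟨i, hi, rfl⟩ : ∃ i : Fin 4, eval pt (X i : RR) = 0 ∧ q = genT i := by
    rcases hq with rfl | rfl
    · exact ⟨0, by simp [pt], rfl⟩
    · exact ⟨1, by simp [pt], rfl⟩
  simp only [genT] at h
  refine ⟨(fb ^ 2 + X i * fb * gb + gb ^ 2) * ga, gb ^ 2 * fa, ?_, ?_, ?_⟩
  · simp only [map_mul, map_add, map_pow, hi, zero_mul]
    nlinarith [mul_pos hfb hfb, mul_pos hgb hgb]
  · simp only [map_mul, map_pow]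
    nlinarith [mul_pos hgb hgb]
  · simp only [map_mul, map_add, map_pow]
    linear_combination (-(c * (algebraMap RR Ft gb) ^ 2)) * hea +
      ((algebraMap RR Ft gb) ^ 2 * algebraMap RR Ft ga) * h +
      (algebraMap RR Ft ga * (algebraMap RR Ft fb + b * algebraMap RR Ft gb) +
        algebraMap RR Ft (X i) * algebraMap RR Ft ga * algebraMap RR Ft gb) * heb

lemma posAll {Y : ℤ → Ft} (hY : IsDefSeq Y) : ∀ m : ℤ, PosF (Y m) := by
  obtain ⟨h1, h2, hrel⟩ := hY
  have p1 : PosF (Y 1) := by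
    refine ⟨X 2, 1, by simp [pt], by simp, by simp [h1, genT]⟩
  have p2 : PosF (Y 2) := by
    refine ⟨X 3, 1, by simp [pt], by simp, by simp [h2, genT]⟩
  have up : ∀ n : ℕ, PosF (Y (1 + n)) ∧ PosF (Y (2 + n)) := by
    intro n
    induction n with
    | zero => exact ⟨by simpa using p1, by simpa using p2⟩
    | succ k ih =>
      refine ⟨by rw [show (1 : ℤ) + (k + 1 : ℕ) = 2 + k by push_cast; ring]; exact ih.2, ?_⟩
      have hr := hrel (2 + k)
      rw [show (2 : ℤ) + (k : ℕ) - 1 = 1 + k by ring, show (2 : ℤ) + (k : ℕ) + 1 = 2 + (k + 1 : ℕ) by push_cast; ring] at hr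
      exact PosF.step (qq_cases _) ih.1 ih.2 hr
  have dn : ∀ n : ℕ, PosF (Y (2 - n)) ∧ PosF (Y (1 - n)) := by
    intro n
    induction n with
    | zero => exact ⟨by simpa using p2, by simpa using p1⟩
    | succ k ih =>
      refine ⟨by rw [show (2 : ℤ) - (k + 1 : ℕ) = 1 - k by push_cast; ring]; exact ih.2, ?_⟩
      have hr := hrel (1 - k)
      rw [show (1 : ℤ) - (k : ℕ) - 1 = 1 - (k + 1 : ℕ) by push_cast; ring,
        show (1 : ℤ) - (k : ℕ) + 1 = 2 - k by ring] at hr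
      have hr' : Y (2 - (k : ℤ)) * Y (1 - ((k : ℕ) + 1 : ℕ)) = Y (1 - k) ^ 2 + qq (1 - k) * Y (1 - k) + 1 := by
        rw [mul_comm]; exact hr
      exact PosF.step (qq_cases _) ih.1 ih.2 hr'
  intro m
  rcases le_or_gt 1 m with hm | hm
  · have : m = 1 + ((m - 1).toNat : ℤ) := by omega
    rw [this]; exact (up _).1
  · have : m = 1 - ((1 - m).toNat : ℤ) := by omega
    rw [this]; exact (dn _).2

lemma qq_congr {a b : ℤ} (h : a % 2 = b % 2) : qq a = qq b := by
  unfold qq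
  have : Odd a ↔ Odd b := by rw [Int.odd_iff, Int.odd_iff, h]
  simp [this]

lemma keyL {Y : ℤ → Ft} (hY : IsDefSeq Y) :
    ∀ m : ℤ, Zel Y * Y m = Y (m - 1) + Y (m + 1) + qq (m + 1) := by
  have hrel := hY.2.2
  have pos := posAll hY
  have base : Zel Y * Y 1 = Y 0 + Y 2 + qq 2 := by
    have r1 := hrel 1
    have r2 := hrel 2
    norm_num at r1 r2
    unfold Zel
    have e1 : qq 1 = genT 0 := by unfold qq; norm_num
    have e2 : qq 2 = genT 1 := by unfold qq; simp [Int.odd_iff]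
    rw [e1] at r1; rw [e2] at r2 ⊢
    linear_combination Y 0 * r2 + (Y 2 + genT 1) * r1
  have stepUp : ∀ m : ℤ, Zel Y * Y m = Y (m - 1) + Y (m + 1) + qq (m + 1) →
      Zel Y * Y (m + 1) = Y m + Y (m + 2) + qq (m + 2) := by
    intro m hm
    have hne := (pos m).ne_zero
    apply mul_left_cancel₀ hne
    have r1 := hrel m
    have r2 := hrel (m + 1)
    rw [show m + 1 - 1 = m by ring, show m + 1 + 1 = m + 2 by ring] at r2
    have hq : qq (m + 2) = qq m := qq_congr (by omega)
    rw [hq]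
    linear_combination Y (m + 1) * hm + r1 - r2
  have stepDn : ∀ m : ℤ, Zel Y * Y (m + 1) = Y m + Y (m + 2) + qq (m + 2) →
      Zel Y * Y m = Y (m - 1) + Y (m + 1) + qq (m + 1) := by
    intro m hm
    have hne := (pos (m + 1)).ne_zero
    apply mul_left_cancel₀ hne
    have r1 := hrel m
    have r2 := hrel (m + 1)
    rw [show m + 1 - 1 = m by ring, show m + 1 + 1 = m + 2 by ring] at r2
    have hq : qq (m + 2) = qq m := qq_congr (by omega)
    rw [hq] at hm
    linear_combination Y m * hm + r2 - r1
  intro m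
  induction m using Int.induction_on with
  | zero =>
    refine stepDn 0 ?_
    rw [show (0 : ℤ) + 1 = 1 by ring, show (0 : ℤ) + 2 = 2 by ring]
    simpa using base
  | succ i ih =>
    have := stepUp i ih
    rw [show (i : ℤ) + 1 - 1 = (i : ℤ) by ring, show (i : ℤ) + 1 + 1 = (i : ℤ) + 2 by ring]
    exact this
  | pred i ih =>
    refine stepDn (-(i : ℤ) - 1) ?_
    rw [show -(i : ℤ) - 1 + 1 = -(i : ℤ) by ring, show -(i : ℤ) - 1 + 2 = -(i : ℤ) + 1 by ring]
    exact ih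

lemma Zn_zero (Y : ℤ → Ft) : Zn Y 0 = 1 := by simp [Zn, cheb]

lemma Zn_one (Y : ℤ → Ft) : Zn Y 1 = Zel Y := by simp [Zn, cheb]

lemma Zn_two (Y : ℤ → Ft) : Zn Y 2 = Zel Y ^ 2 - 2 := by
  simp [Zn, cheb, map_ofNat]

lemma Zn_rec (Y : ℤ → Ft) (n : ℕ) :
    Zn Y (n + 3) = Zel Y * Zn Y (n + 2) - Zn Y (n + 1) := by
  simp [Zn, cheb]

lemma ZnI_ofNat (Y : ℤ → Ft) (n : ℕ) : ZnI Y (n : ℤ) = Zn Y n := by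
  simp [ZnI]

lemma ZnI_neg (Y : ℤ → Ft) {j : ℤ} (h : j < 0) : ZnI Y j = 0 := by
  simp [ZnI, h]

lemma Z_mul_ZnI (Y : ℤ → Ft) (j : ℤ) (h : 0 ≤ j) :
    Zel Y * ZnI Y j = ZnI Y (j + 1) + ZnI Y (j - 1) + (if j = 1 then 1 else 0) := by
  lift j to ℕ using h
  match j with
  | 0 =>
    rw [show ((0:ℕ):ℤ) + 1 = ((1:ℕ):ℤ) by omega, show ((0:ℕ):ℤ) - 1 = (-1 : ℤ) by omega,
      ZnI_ofNat, ZnI_ofNat, ZnI_neg Y (by omega : (-1:ℤ) < 0), Zn_zero, Zn_one,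
      if_neg (by omega : ¬((0:ℕ):ℤ) = 1)]
    ring
  | 1 =>
    rw [show ((1:ℕ):ℤ) + 1 = ((2:ℕ):ℤ) by omega, show ((1:ℕ):ℤ) - 1 = ((0:ℕ):ℤ) by omega,
      ZnI_ofNat, ZnI_ofNat, ZnI_ofNat, Zn_two, Zn_zero, Zn_one,
      if_pos (by omega : ((1:ℕ):ℤ) = 1)]
    ring
  | (n + 2) =>
    rw [show ((n+2:ℕ):ℤ) + 1 = ((n+3:ℕ):ℤ) by omega,
      show ((n+2:ℕ):ℤ) - 1 = ((n+1:ℕ):ℤ) by omega,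
      ZnI_ofNat, ZnI_ofNat, ZnI_ofNat, Zn_rec,
      if_neg (by omega : ¬((n+2:ℕ):ℤ) = 1)]
    ring

lemma two_step {P : ℕ → Prop} (h1 : P 1) (h2 : P 2)
    (hstep : ∀ l : ℕ, P (l + 1) → P (l + 2) → P (l + 3)) : ∀ n, 1 ≤ n → P n := by
  have key : ∀ n : ℕ, P (n + 1) ∧ P (n + 2) := by
    intro n
    induction n with
    | zero => exact ⟨h1, h2⟩
    | succ k ih => exact ⟨ih.2, hstep k ih.1 ih.2⟩
  intro n hn
  obtain ⟨k, rfl⟩ : ∃ k, n = k + 1 := ⟨n - 1, by omega⟩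
  exact (key k).1

lemma ZYI {Y : ℤ → Ft} (hY : IsDefSeq Y) (m : ℤ) :
    ∀ n : ℕ, 1 ≤ n → Zn Y n * Y m = Y (m - n) + Y (m + n) +
      ∑ k ∈ Icc 1 n, (k : Ft) * qq (m + k) * ZnI Y ((n : ℤ) - k) := by
  have hL := keyL hY
  apply two_step
  · -- n = 1
    rw [Zn_one, hL m]
    rw [show Finset.Icc 1 1 = {1} from rfl, Finset.sum_singleton]
    rw [show ((1:ℕ):ℤ) - ((1:ℕ):ℤ) = ((0:ℕ):ℤ) by norm_num, ZnI_ofNat, Zn_zero]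
    push_cast
    ring
  · -- n = 2
    rw [Zn_two]
    rw [show Finset.Icc (1:ℕ) 2 = {1, 2} from rfl]
    rw [Finset.sum_insert (by decide), Finset.sum_singleton]
    rw [show ((2:ℕ):ℤ) - ((1:ℕ):ℤ) = ((1:ℕ):ℤ) by norm_num, ZnI_ofNat, Zn_one]
    rw [show ((2:ℕ):ℤ) - ((2:ℕ):ℤ) = ((0:ℕ):ℤ) by norm_num, ZnI_ofNat, Zn_zero]
    have k1 := hL m
    have k2 := hL (m - 1)
    have k3 := hL (m + 1)
    rw [show m - 1 - 1 = m - 2 by ring, show m - 1 + 1 = m by ring] at k2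
    rw [show m + 1 + 1 = m + 2 by ring] at k3
    have hq : qq m = qq (m + 2) := qq_congr (by omega)
    rw [show m + 1 - 1 = m by ring] at k3
    push_cast
    linear_combination Zel Y * k1 + k2 + k3 + hq
  · -- step
    intro l ih1 ih2
    have hrec := Zn_rec Y l
    -- Z * sum(l+2) split
    have hsplit : Zel Y * (∑ k ∈ Icc 1 (l+2), (k : Ft) * qq (m + k) * ZnI Y (((l+2:ℕ) : ℤ) - k)) =
        (∑ k ∈ Icc 1 (l+2), (k : Ft) * qq (m + k) * ZnI Y (((l+3:ℕ) : ℤ) - k)) +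
        (∑ k ∈ Icc 1 (l+2), (k : Ft) * qq (m + k) * ZnI Y (((l+1:ℕ) : ℤ) - k)) +
        ((l+1 : ℕ) : Ft) * qq (m + (l+1 : ℕ)) := by
      rw [Finset.mul_sum]
      have hterm : ∀ k ∈ Icc 1 (l+2),
          Zel Y * ((k : Ft) * qq (m + k) * ZnI Y (((l+2:ℕ) : ℤ) - k)) =
          (k : Ft) * qq (m + k) * ZnI Y (((l+3:ℕ) : ℤ) - k) +
          (k : Ft) * qq (m + k) * ZnI Y (((l+1:ℕ) : ℤ) - k) +
          (if k = l+1 then (k : Ft) * qq (m + k) else 0) := by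
        intro k hk
        simp only [Finset.mem_Icc] at hk
        have h0 : (0:ℤ) ≤ ((l+2:ℕ) : ℤ) - k := by omega
        have hz := Z_mul_ZnI Y (((l+2:ℕ) : ℤ) - k) h0
        rw [show ((l+2:ℕ) : ℤ) - k + 1 = ((l+3:ℕ) : ℤ) - k by omega,
          show ((l+2:ℕ) : ℤ) - k - 1 = ((l+1:ℕ) : ℤ) - k by omega] at hz
        by_cases hk1 : k = l + 1
        · subst hk1
          rw [if_pos (by omega : ((l+2:ℕ) : ℤ) - ((l+1:ℕ):ℤ) = 1)] at hz
          rw [if_pos rfl]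
          linear_combination ((l+1:ℕ) : Ft) * qq (m + (l+1:ℕ)) * hz
        · rw [if_neg (by omega : ¬(((l+2:ℕ) : ℤ) - (k:ℤ) = 1))] at hz
          rw [if_neg hk1]
          linear_combination (k : Ft) * qq (m + k) * hz
      rw [Finset.sum_congr rfl hterm, Finset.sum_add_distrib, Finset.sum_add_distrib,
        Finset.sum_ite_eq' (Icc 1 (l+2)) (l+1) (fun k => (k : Ft) * qq (m + k)),
        if_pos (by simp only [Finset.mem_Icc]; omega)]
    -- peel tops
    have hpeel1 : (∑ k ∈ Icc 1 (l+2), (k : Ft) * qq (m + k) * ZnI Y (((l+1:ℕ) : ℤ) - k)) =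
        ∑ k ∈ Icc 1 (l+1), (k : Ft) * qq (m + k) * ZnI Y (((l+1:ℕ) : ℤ) - k) := by
      rw [show l + 2 = (l+1) + 1 from rfl,
        Finset.sum_Icc_succ_top (by omega : 1 ≤ l+1+1)]
      rw [ZnI_neg Y (by omega : ((l+1:ℕ) : ℤ) - ((l+1+1 : ℕ):ℤ) < 0)]
      ring
    have hpeel2 : (∑ k ∈ Icc 1 (l+3), (k : Ft) * qq (m + k) * ZnI Y (((l+3:ℕ) : ℤ) - k)) =
        (∑ k ∈ Icc 1 (l+2), (k : Ft) * qq (m + k) * ZnI Y (((l+3:ℕ) : ℤ) - k)) +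
        ((l+3 : ℕ) : Ft) * qq (m + (l+3 : ℕ)) := by
      rw [show l + 3 = (l+2) + 1 from rfl,
        Finset.sum_Icc_succ_top (by omega : 1 ≤ l+2+1)]
      rw [show ((l+2+1:ℕ) : ℤ) = ((l+3:ℕ) : ℤ) by omega]
      rw [show ((l+3:ℕ) : ℤ) - ((l+3:ℕ) : ℤ) = ((0:ℕ):ℤ) by omega, ZnI_ofNat, Zn_zero]
      norm_num
    -- keyL at the two ends
    have k1 := hL (m - (l+2 : ℕ))
    have k2 := hL (m + (l+2 : ℕ))
    rw [show m - (l+2 : ℕ) - 1 = m - (l+3 : ℕ) by push_cast; ring,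
      show m - (l+2 : ℕ) + 1 = m - (l+1 : ℕ) by push_cast; ring] at k1
    rw [show m + (l+2 : ℕ) + 1 = m + (l+3 : ℕ) by push_cast; ring,
      show m + (l+2 : ℕ) - 1 = m + (l+1 : ℕ) by push_cast; ring] at k2
    have hq1 : qq (m - (l+1:ℕ)) = qq (m + (l+3:ℕ)) := qq_congr (by omega)
    rw [hq1] at k1
    have hq2 : qq (m + (l+1:ℕ)) = qq (m + (l+3:ℕ)) := qq_congr (by omega)
    -- assemble
    rw [show Zn Y (l+3) = Zel Y * Zn Y (l+2) - Zn Y (l+1) from hrec, hpeel2]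
    rw [hpeel1] at hsplit
    linear_combination (norm := (push_cast; ring1)) Zel Y * ih2 - ih1 + hsplit + k1 + k2 +
      ((l+1:ℕ) : Ft) * hq2

lemma sum_Icc_top_ext {f : ℕ → Ft} {a b c : ℕ} (h : b ≤ c)
    (hz : ∀ k, b < k → k ≤ c → f k = 0) :
    ∑ k ∈ Icc a b, f k = ∑ k ∈ Icc a c, f k := by
  apply Finset.sum_subset
  · exact Finset.Icc_subset_Icc_right h
  · intro x hx hnx
    simp only [Finset.mem_Icc] at hx hnx
    exact hz x (by omega) hx.2

lemma sum_Icc_bot_ext {f : ℕ → Ft} {a a' b : ℕ} (h : a' ≤ a)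
    (hz : ∀ k, a' ≤ k → k < a → f k = 0) :
    ∑ k ∈ Icc a b, f k = ∑ k ∈ Icc a' b, f k := by
  apply Finset.sum_subset
  · exact Finset.Icc_subset_Icc_left h
  · intro x hx hnx
    simp only [Finset.mem_Icc] at hx hnx
    exact hz x hx.1 (by omega)

lemma sum_shift2 (a b : ℕ) (F : ℕ → Ft) :
    ∑ k ∈ Icc a b, F (k + 2) = ∑ k ∈ Icc (a+2) (b+2), F k := by
  apply Finset.sum_nbij' (i := fun k => k + 2) (j := fun k => k - 2) <;>
    intro x hx <;>
    first
      | rfl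
      | (simp only [Finset.mem_Icc] at *; omega)

lemma TsumL : ∀ n : ℕ, ∑ k ∈ Icc 1 n, min k (n - k) = (n / 2) * ((n + 1) / 2) := by
  intro n
  induction n with
  | zero => simp
  | succ p ih =>
    rw [Finset.sum_Icc_succ_top (by omega : 1 ≤ p + 1)]
    have h1 : ∀ k ∈ Icc 1 p, min k (p + 1 - k) = min k (p - k) + (if p < 2 * k then 1 else 0) := by
      intro k hk
      simp only [Finset.mem_Icc] at hk
      split_ifs <;> omega
    rw [Finset.sum_congr rfl h1, Finset.sum_add_distrib, ih]
    have h2 : (∑ k ∈ Icc 1 p, if p < 2 * k then 1 else 0) = (Finset.filter (fun k => p < 2 * k) (Icc 1 p)).card := by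
      rw [Finset.card_filter]
    have h3 : Finset.filter (fun k => p < 2 * k) (Icc 1 p) = Icc (p / 2 + 1) p := by
      ext x
      simp only [Finset.mem_filter, Finset.mem_Icc]
      omega
    rw [h2, h3, Nat.card_Icc]
    have h4 : min (p + 1) (p + 1 - (p + 1)) = 0 := by omega
    rw [h4]
    obtain ⟨c, rfl | rfl⟩ : ∃ c, p = 2 * c ∨ p = 2 * c + 1 := ⟨p / 2, by omega⟩
    · have e1 : (2 * c) / 2 = c := by omega
      have e2 : (2 * c + 1) / 2 = c := by omega
      have e3 : (2 * c + 1 + 1) / 2 = c + 1 := by omega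
      rw [e1, e2, e3]
      have e4 : 2 * c + 1 - (c + 1) = c := by omega
      rw [e4]
      ring
    · have e1 : (2 * c + 1) / 2 = c := by omega
      have e2 : (2 * c + 1 + 1) / 2 = c + 1 := by omega
      have e3 : (2 * c + 1 + 1 + 1) / 2 = c + 1 := by omega
      rw [e1, e2, e3]
      have e4 : 2 * c + 1 + 1 - (c + 1) = c + 1 := by omega
      rw [e4]
      ring

lemma qq_mul_qq_odd {x y : ℤ} (h : Odd (x + y)) : qq x * qq y = genT 0 * genT 1 := by
  unfold qq
  rw [Int.odd_iff] at h
  split_ifs with h1 h2 h2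
  · rw [Int.odd_iff] at h1 h2; omega
  · rfl
  · rw [mul_comm]
  · rw [Int.odd_iff] at h1 h2
    omega

lemma qq_sq_ite (x : ℤ) : qq x * qq x = if Odd x then genT 0 ^ 2 else genT 1 ^ 2 := by
  unfold qq
  split_ifs <;> ring

lemma Fgen (W : ℕ → Ft) (n : ℕ) (hn : 2 ≤ n) :
    (∑ k ∈ Icc 1 (n+1), ((min k (n+1-k) : ℕ) : Ft) * W k)
      + (∑ k ∈ Icc 1 (n+1), ((min (k-2) (n+1-k) : ℕ) : Ft) * W k)
      + W (n+1)
    = (∑ k ∈ Icc 1 (n+1), ((min k (n-k) : ℕ) : Ft) * W k)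
      + (∑ k ∈ Icc 1 (n+1), ((min (k-2) (n+2-k) : ℕ) : Ft) * W k)
      + W (n/2+1) + (if n % 2 = 1 then W ((n+3)/2) else 0) := by
  have e1 : W (n+1) = ∑ k ∈ Icc 1 (n+1), (if k = n+1 then W k else 0) := by
    rw [Finset.sum_ite_eq' (Icc 1 (n+1)) (n+1) W, if_pos (by simp only [Finset.mem_Icc]; omega)]
  have e2 : W (n/2+1) = ∑ k ∈ Icc 1 (n+1), (if k = n/2+1 then W k else 0) := by
    rw [Finset.sum_ite_eq' (Icc 1 (n+1)) (n/2+1) W, if_pos (by simp only [Finset.mem_Icc]; omega)]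
  have e3 : (if n % 2 = 1 then W ((n+3)/2) else 0)
      = ∑ k ∈ Icc 1 (n+1), (if n % 2 = 1 ∧ k = (n+3)/2 then W k else 0) := by
    by_cases h : n % 2 = 1
    · simp only [h, if_pos, true_and]
      rw [Finset.sum_ite_eq' (Icc 1 (n+1)) ((n+3)/2) W, if_pos (by simp only [Finset.mem_Icc]; omega)]
    · simp [h]
  rw [e1, e2, e3, ← Finset.sum_add_distrib, ← Finset.sum_add_distrib,
    ← Finset.sum_add_distrib, ← Finset.sum_add_distrib, ← Finset.sum_add_distrib]
  apply Finset.sum_congr rfl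
  intro k hk
  simp only [Finset.mem_Icc] at hk
  rw [show (if k = n+1 then W k else 0) = ((if k = n+1 then 1 else 0 : ℕ) : Ft) * W k from by
      split_ifs <;> simp,
    show (if k = n/2+1 then W k else 0) = ((if k = n/2+1 then 1 else 0 : ℕ) : Ft) * W k from by
      split_ifs <;> simp,
    show (if n % 2 = 1 ∧ k = (n+3)/2 then W k else 0)
        = ((if n % 2 = 1 ∧ k = (n+3)/2 then 1 else 0 : ℕ) : Ft) * W k from by
      split_ifs <;> simp]
  have key : min k (n+1-k) + min (k-2) (n+1-k) + (if k = n+1 then 1 else 0)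
      = min k (n-k) + min (k-2) (n+2-k) + (if k = n/2+1 then 1 else 0)
        + (if n % 2 = 1 ∧ k = (n+3)/2 then 1 else 0) := by
    split_ifs <;> omega
  linear_combination (norm := (push_cast; ring1)) (W k) * (congrArg (fun x : ℕ => (x : Ft)) key)

lemma YYI {Y : ℤ → Ft} (hY : IsDefSeq Y) (m : ℤ) :
    ∀ n : ℕ, 1 ≤ n → Y m * Y (m + n) =
      Y (m + ((n / 2 : ℕ) : ℤ)) * Y (m + (((n + 1) / 2 : ℕ) : ℤ)) +
        (∑ k ∈ Finset.Icc 1 (n - 1), ((min k (n - k) : ℕ) : Ft) * qq (m + k) *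
          Y (m + (n : ℤ) - k)) +
        ∑ k ∈ Finset.Icc 1 n, ck k * ZnI Y ((n : ℤ) - 1 - k) := by
  have hL := keyL hY
  have hrel := hY.2.2
  apply two_step
  · -- n = 1
    rw [show Finset.Icc (1:ℕ) (1-1) = ∅ from rfl, Finset.sum_empty,
      show Finset.Icc (1:ℕ) 1 = {1} from rfl, Finset.sum_singleton,
      ZnI_neg Y (by omega : ((1:ℕ):ℤ) - 1 - ((1:ℕ):ℤ) < 0)]
    norm_num
  · -- n = 2
    rw [show (2:ℕ)-1 = 1 from rfl,
      show Finset.Icc (1:ℕ) 1 = {1} from rfl, Finset.sum_singleton,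
      show Finset.Icc (1:ℕ) 2 = {1, 2} from rfl,
      Finset.sum_insert (by decide), Finset.sum_singleton,
      show ((2:ℕ):ℤ) - 1 - ((1:ℕ):ℤ) = ((0:ℕ):ℤ) by omega, ZnI_ofNat, Zn_zero,
      ZnI_neg Y (by omega : ((2:ℕ):ℤ) - 1 - ((2:ℕ):ℤ) < 0)]
    have hck1 : ck 1 = 1 := by norm_num [ck]
    rw [hck1]
    norm_num
    have r := hrel (m + 1)
    rw [show m + 1 - 1 = m by ring, show m + 1 + 1 = m + 2 by ring] at r
    rw [show (m + 2 - 1 : ℤ) = m + 1 by ring]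
    linear_combination r
  · -- step
    intro l ih1 ih2
    rw [show l+1+1 = l+2 by omega, show l+1-1 = l by omega] at ih1
    rw [show l+2+1 = l+3 by omega, show l+2-1 = l+1 by omega] at ih2
    rw [show l+3+1 = l+4 by omega, show l+3-1 = l+2 by omega]
    -- linearization
    have hYlin : Y (m + ((l+3:ℕ):ℤ)) = Zel Y * Y (m + ((l+2:ℕ):ℤ)) - Y (m + ((l+1:ℕ):ℤ))
        - qq (m + ((l+3:ℕ):ℤ)) := by
      have h := hL (m + ((l+2:ℕ):ℤ))
      rw [show m + ((l+2:ℕ):ℤ) - 1 = m + ((l+1:ℕ):ℤ) by push_cast; ring,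
        show m + ((l+2:ℕ):ℤ) + 1 = m + ((l+3:ℕ):ℤ) by push_cast; ring] at h
      linear_combination -h
    -- h1 : reassociate and extend ih2's S1 sum
    have h1 : (∑ k ∈ Finset.Icc 1 (l+1), ((min k (l+2-k) : ℕ) : Ft) * qq (m + k) *
          Y (m + ((l+2:ℕ) : ℤ) - k))
        = ∑ k ∈ Finset.Icc 1 (l+3), ((min k (l+2-k) : ℕ) : Ft) * (qq (m + k) *
          Y (m + ((l+2:ℕ) : ℤ) - k)) := by
      refine Eq.trans (Finset.sum_congr rfl fun k _ => mul_assoc _ _ _)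
        (sum_Icc_top_ext (by omega) fun k hk1 hk2 => ?_)
      rw [show min k (l+2-k) = 0 from by omega]
      simp
    -- h2 : multiply by Z termwise
    have h2 : Zel Y * (∑ k ∈ Finset.Icc 1 (l+3), ((min k (l+2-k) : ℕ) : Ft) * (qq (m + k) *
          Y (m + ((l+2:ℕ) : ℤ) - k)))
        = (∑ k ∈ Finset.Icc 1 (l+3), ((min k (l+2-k) : ℕ) : Ft) * (qq (m + k) *
            Y (m + ((l+1:ℕ) : ℤ) - k)))
          + (∑ k ∈ Finset.Icc 1 (l+3), ((min k (l+2-k) : ℕ) : Ft) * (qq (m + k) *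
            Y (m + ((l+3:ℕ) : ℤ) - k)))
          + (∑ k ∈ Finset.Icc 1 (l+3), ((min k (l+2-k) : ℕ) : Ft) * qq (m + k) *
            qq (m + ((l+3:ℕ) : ℤ) - k)) := by
      rw [Finset.mul_sum, ← Finset.sum_add_distrib, ← Finset.sum_add_distrib]
      apply Finset.sum_congr rfl
      intro k hk
      have h := hL (m + ((l+2:ℕ):ℤ) - k)
      rw [show m + ((l+2:ℕ):ℤ) - k - 1 = m + ((l+1:ℕ):ℤ) - k by push_cast; ring,
        show m + ((l+2:ℕ):ℤ) - k + 1 = m + ((l+3:ℕ):ℤ) - k by push_cast; ring] at h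
      linear_combination ((min k (l+2-k) : ℕ) : Ft) * qq (m + k) * h
    -- h3 : reindex the downward sum
    have h3 : (∑ k ∈ Finset.Icc 1 (l+3), ((min k (l+2-k) : ℕ) : Ft) * (qq (m + k) *
          Y (m + ((l+1:ℕ) : ℤ) - k)))
        = ∑ k ∈ Finset.Icc 1 (l+3), ((min (k-2) (l+4-k) : ℕ) : Ft) * (qq (m + k) *
          Y (m + ((l+3:ℕ) : ℤ) - k)) := by
      refine Eq.trans ((sum_Icc_top_ext (by omega : l+1 ≤ l+3) fun k hk1 hk2 => ?_).symm)
        (Eq.trans ?_ ((sum_Icc_bot_ext (by omega : 1 ≤ 3) fun k hk1 hk2 => ?_)))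
      · rw [show min k (l+2-k) = 0 from by omega]; simp
      · refine Finset.sum_nbij' (fun k => k+2) (fun k => k-2) ?_ ?_ ?_ ?_ ?_
        · intro x hx; simp only [Finset.mem_Icc] at *; omega
        · intro x hx; simp only [Finset.mem_Icc] at *; omega
        · intro x hx; show x + 2 - 2 = x; omega
        · intro x hx; show x - 2 + 2 = x; simp only [Finset.mem_Icc] at hx; omega
        · intro x hx; simp only [Finset.mem_Icc] at hx
          show ((min x (l+2-x) : ℕ) : Ft) * (qq (m + (x:ℕ)) * Y (m + ((l+1:ℕ):ℤ) - (x:ℕ)))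
            = ((min (x+2-2) (l+4-(x+2)) : ℕ) : Ft) * (qq (m + ((x+2:ℕ):ℤ)) *
              Y (m + ((l+3:ℕ):ℤ) - ((x+2:ℕ):ℤ)))
          rw [show min (x+2-2) (l+4-(x+2)) = min x (l+2-x) from by omega,
            show qq (m + ((x+2:ℕ):ℤ)) = qq (m + (x:ℕ)) from qq_congr (by push_cast; omega),
            show (m + ((l+3:ℕ):ℤ) - ((x+2:ℕ):ℤ)) = m + ((l+1:ℕ):ℤ) - (x:ℕ) from by push_cast; ring]
      · rw [show min (k-2) (l+4-k) = 0 from by omega]; simp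
    -- h4 : reindex ih1's S1 sum
    have h4 : (∑ k ∈ Finset.Icc 1 l, ((min k (l+1-k) : ℕ) : Ft) * qq (m + k) *
          Y (m + ((l+1:ℕ) : ℤ) - k))
        = ∑ k ∈ Finset.Icc 1 (l+3), ((min (k-2) (l+3-k) : ℕ) : Ft) * (qq (m + k) *
          Y (m + ((l+3:ℕ) : ℤ) - k)) := by
      refine Eq.trans (Finset.sum_congr rfl fun k _ => mul_assoc _ _ _)
        (Eq.trans ?_ ((sum_Icc_bot_ext (by omega : 1 ≤ 3) fun k hk1 hk2 => ?_)))
      · refine Eq.trans ?_ ((sum_Icc_top_ext (by omega : l+2 ≤ l+3) fun k hk1 hk2 => ?_))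
        · refine Finset.sum_nbij' (fun k => k+2) (fun k => k-2) ?_ ?_ ?_ ?_ ?_
          · intro x hx; simp only [Finset.mem_Icc] at *; omega
          · intro x hx; simp only [Finset.mem_Icc] at *; omega
          · intro x hx; show x + 2 - 2 = x; omega
          · intro x hx; show x - 2 + 2 = x; simp only [Finset.mem_Icc] at hx; omega
          · intro x hx; simp only [Finset.mem_Icc] at hx
            show ((min x (l+1-x) : ℕ) : Ft) * (qq (m + (x:ℕ)) * Y (m + ((l+1:ℕ):ℤ) - (x:ℕ)))
              = ((min (x+2-2) (l+3-(x+2)) : ℕ) : Ft) * (qq (m + ((x+2:ℕ):ℤ)) *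
                Y (m + ((l+3:ℕ):ℤ) - ((x+2:ℕ):ℤ)))
            rw [show min (x+2-2) (l+3-(x+2)) = min x (l+1-x) from by omega,
              show qq (m + ((x+2:ℕ):ℤ)) = qq (m + (x:ℕ)) from qq_congr (by push_cast; omega),
              show (m + ((l+3:ℕ):ℤ) - ((x+2:ℕ):ℤ)) = m + ((l+1:ℕ):ℤ) - (x:ℕ) from by push_cast; ring]
        · rw [show min (k-2) (l+3-k) = 0 from by omega]; simp
      · rw [show min (k-2) (l+3-k) = 0 from by omega]; simp
    -- h5 : Z times the S2 sum
    have h5a : (∑ k ∈ Finset.Icc 1 (l+2), ck k * ZnI Y (((l+2:ℕ):ℤ) - 1 - k))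
        = ∑ k ∈ Finset.Icc 1 (l+1), ck k * ZnI Y (((l+2:ℕ):ℤ) - 1 - k) :=
      (sum_Icc_top_ext (by omega) fun k hk1 hk2 => by
        rw [ZnI_neg Y (by omega : ((l+2:ℕ):ℤ) - 1 - (k:ℕ) < 0)]; ring).symm
    have h5b : ∀ k ∈ Finset.Icc 1 (l+1), Zel Y * (ck k * ZnI Y (((l+2:ℕ):ℤ) - 1 - k))
        = ck k * ZnI Y (((l+3:ℕ):ℤ) - 1 - k) + ck k * ZnI Y (((l+1:ℕ):ℤ) - 1 - k)
          + (if k = l then ck k else 0) := by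
      intro k hk
      simp only [Finset.mem_Icc] at hk
      have hz := Z_mul_ZnI Y (((l+2:ℕ):ℤ) - 1 - k) (by omega)
      rw [show ((l+2:ℕ):ℤ) - 1 - (k:ℕ) + 1 = ((l+3:ℕ):ℤ) - 1 - (k:ℕ) by push_cast; ring,
        show ((l+2:ℕ):ℤ) - 1 - (k:ℕ) - 1 = ((l+1:ℕ):ℤ) - 1 - (k:ℕ) by push_cast; ring] at hz
      by_cases hkl : k = l
      · rw [if_pos (by omega : ((l+2:ℕ):ℤ) - 1 - (k:ℕ) = 1)] at hz
        rw [if_pos hkl]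
        linear_combination ck k * hz
      · rw [if_neg (by omega : ¬(((l+2:ℕ):ℤ) - 1 - (k:ℕ) = 1))] at hz
        rw [if_neg hkl]
        linear_combination ck k * hz
    have h5c : (∑ k ∈ Finset.Icc 1 (l+3), ck k * ZnI Y (((l+3:ℕ):ℤ) - 1 - k))
        = (∑ k ∈ Finset.Icc 1 (l+1), ck k * ZnI Y (((l+3:ℕ):ℤ) - 1 - k)) + ck (l+2) := by
      have ha : (∑ k ∈ Finset.Icc 1 (l+2), ck k * ZnI Y (((l+3:ℕ):ℤ) - 1 - k))
          = ∑ k ∈ Finset.Icc 1 (l+3), ck k * ZnI Y (((l+3:ℕ):ℤ) - 1 - k) :=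
        sum_Icc_top_ext (by omega) fun k hk1 hk2 => by
          rw [ZnI_neg Y (by omega : ((l+3:ℕ):ℤ) - 1 - (k:ℕ) < 0)]; ring
      have hb := Finset.sum_Icc_succ_top (a := 1) (b := l+1) (by omega)
        (fun k => ck k * ZnI Y (((l+3:ℕ):ℤ) - 1 - k))
      rw [show l+1+1 = l+2 by omega] at hb
      rw [← ha, hb]
      congr 1
      show ck (l+2) * ZnI Y (((l+3:ℕ):ℤ) - 1 - ((l+2:ℕ):ℤ)) = ck (l+2)
      rw [show ((l+3:ℕ):ℤ) - 1 - ((l+2:ℕ):ℤ) = ((0:ℕ):ℤ) by omega, ZnI_ofNat, Zn_zero, mul_one]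
    have h5 : Zel Y * (∑ k ∈ Finset.Icc 1 (l+2), ck k * ZnI Y (((l+2:ℕ):ℤ) - 1 - k))
        = (∑ k ∈ Finset.Icc 1 (l+3), ck k * ZnI Y (((l+3:ℕ):ℤ) - 1 - k)) - ck (l+2)
          + (∑ k ∈ Finset.Icc 1 (l+1), ck k * ZnI Y (((l+1:ℕ):ℤ) - 1 - k))
          + (if l ∈ Finset.Icc 1 (l+1) then ck l else 0) := by
      rw [h5a, Finset.mul_sum, Finset.sum_congr rfl h5b, Finset.sum_add_distrib,
        Finset.sum_add_distrib, Finset.sum_ite_eq' (Finset.Icc 1 (l+1)) l ck, h5c]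
      ring
    -- h6 : head transformation
    have h6 : Zel Y * (Y (m + (((l+2)/2:ℕ):ℤ)) * Y (m + (((l+3)/2:ℕ):ℤ)))
        = Y (m + (((l+1)/2:ℕ):ℤ)) * Y (m + (((l+2)/2:ℕ):ℤ))
          + Y (m + (((l+3)/2:ℕ):ℤ)) * Y (m + (((l+4)/2:ℕ):ℤ))
          + qq (m + (((l+2)/2+1:ℕ):ℤ)) * Y (m + ((l+3:ℕ):ℤ) - (((l+2)/2+1:ℕ):ℤ))
          + (if (l+2) % 2 = 1 then
              qq (m + (((l+5)/2:ℕ):ℤ)) * Y (m + ((l+3:ℕ):ℤ) - (((l+5)/2:ℕ):ℤ)) else 0)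
          + (if (l+2) % 2 = 1 then 1 else 0) := by
      obtain ⟨a, rfl | rfl⟩ : ∃ a, l = 2*a ∨ l = 2*a+1 := ⟨l/2, by omega⟩
      · rw [if_neg (by omega : ¬(2*a+2) % 2 = 1), if_neg (by omega : ¬(2*a+2) % 2 = 1),
          show (2*a+2)/2 = a+1 by omega, show (2*a+3)/2 = a+1 by omega,
          show (2*a+1)/2 = a by omega, show (2*a+4)/2 = a+2 by omega,
          show a+1+1 = a+2 by omega,
          show m + ((2*a+3:ℕ):ℤ) - ((a+2:ℕ):ℤ) = m + ((a+1:ℕ):ℤ) by push_cast; ring]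
        have h := hL (m + ((a+1:ℕ):ℤ))
        rw [show m + ((a+1:ℕ):ℤ) - 1 = m + ((a:ℕ):ℤ) by push_cast; ring,
          show m + ((a+1:ℕ):ℤ) + 1 = m + ((a+2:ℕ):ℤ) by push_cast; ring] at h
        linear_combination Y (m + ((a+1:ℕ):ℤ)) * h
      · rw [if_pos (by omega : (2*a+1+2) % 2 = 1), if_pos (by omega : (2*a+1+2) % 2 = 1),
          show (2*a+1+2)/2 = a+1 by omega, show (2*a+1+3)/2 = a+2 by omega,
          show (2*a+1+1)/2 = a+1 by omega, show (2*a+1+4)/2 = a+2 by omega,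
          show (2*a+1+5)/2 = a+3 by omega, show a+1+1 = a+2 by omega,
          show m + ((2*a+1+3:ℕ):ℤ) - ((a+2:ℕ):ℤ) = m + ((a+2:ℕ):ℤ) by push_cast; ring,
          show m + ((2*a+1+3:ℕ):ℤ) - ((a+3:ℕ):ℤ) = m + ((a+1:ℕ):ℤ) by push_cast; ring]
        have h := hL (m + ((a+2:ℕ):ℤ))
        rw [show m + ((a+2:ℕ):ℤ) - 1 = m + ((a+1:ℕ):ℤ) by push_cast; ring,
          show m + ((a+2:ℕ):ℤ) + 1 = m + ((a+3:ℕ):ℤ) by push_cast; ring] at h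
        have r := hrel (m + ((a+2:ℕ):ℤ))
        rw [show m + ((a+2:ℕ):ℤ) - 1 = m + ((a+1:ℕ):ℤ) by push_cast; ring,
          show m + ((a+2:ℕ):ℤ) + 1 = m + ((a+3:ℕ):ℤ) by push_cast; ring] at r
        linear_combination Y (m + ((a+1:ℕ):ℤ)) * h + r
    -- hg : goal S1 sum bridge
    have hg : (∑ k ∈ Finset.Icc 1 (l+2), ((min k (l+3-k) : ℕ) : Ft) * qq (m + k) *
          Y (m + ((l+3:ℕ):ℤ) - k))
        = ∑ k ∈ Finset.Icc 1 (l+3), ((min k (l+3-k) : ℕ) : Ft) * (qq (m + k) *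
          Y (m + ((l+3:ℕ):ℤ) - k)) := by
      refine Eq.trans (Finset.sum_congr rfl fun k _ => mul_assoc _ _ _)
        (sum_Icc_top_ext (by omega) fun k hk1 hk2 => ?_)
      rw [show min k (l+3-k) = 0 from by omega]
      simp
    -- hF : the combinatorial identity
    have hF := Fgen (fun k => qq (m + (k:ℕ)) * Y (m + ((l+3:ℕ):ℤ) - (k:ℕ))) (l+2) (by omega)
    rw [show l+2+1 = l+3 by omega, show l+2+2 = l+4 by omega, show l+2+3 = l+5 by omega,
      show m + ((l+3:ℕ):ℤ) - ((l+3:ℕ):ℤ) = m by push_cast; ring] at hF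
    -- hCid : the constants identity
    have hCid : (∑ k ∈ Finset.Icc 1 (l+3), ((min k (l+2-k) : ℕ) : Ft) * qq (m + k) *
          qq (m + ((l+3:ℕ):ℤ) - k))
        + (if (l+2) % 2 = 1 then (1:Ft) else 0)
        + (if l ∈ Finset.Icc 1 (l+1) then ck l else 0) = ck (l+2) := by
      obtain ⟨a, rfl | rfl⟩ : ∃ a, l = 2*a ∨ l = 2*a+1 := ⟨l/2, by omega⟩
      · rw [if_neg (by omega : ¬(2*a+2) % 2 = 1)]
        have hterm : ∀ k ∈ Finset.Icc 1 (2*a+3), ((min k (2*a+2-k):ℕ):Ft) * qq (m + k) *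
            qq (m + ((2*a+3:ℕ):ℤ) - k)
            = ((min k (2*a+2-k):ℕ):Ft) * (genT 0 * genT 1) := by
          intro k hk
          rw [mul_assoc]
          congr 1
          apply qq_mul_qq_odd
          have e : (m + (k:ℕ)) + (m + ((2*a+3:ℕ):ℤ) - (k:ℕ)) = 2*m + ((2*a+3:ℕ):ℤ) := by ring
          rw [e, Int.odd_iff]
          omega
        rw [Finset.sum_congr rfl hterm, ← Finset.sum_mul]
        have hsum : (∑ k ∈ Finset.Icc 1 (2*a+3), ((min k (2*a+2-k) : ℕ) : Ft))
            = (((a+1)*(a+1) : ℕ) : Ft) := by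
          rw [← Nat.cast_sum]
          congr 1
          have e := Finset.sum_Icc_succ_top (a := 1) (b := 2*a+2) (by omega)
            (fun k => min k (2*a+2-k))
          rw [show 2*a+2+1 = 2*a+3 by omega] at e
          rw [e]
          have t := TsumL (2*a+2)
          rw [show (2*a+2)/2 = a+1 by omega, show (2*a+2+1)/2 = a+1 by omega] at t
          rw [t]
          show (a+1)*(a+1) + min (2*a+3) (2*a+2 - (2*a+3)) = (a+1)*(a+1)
          rw [show min (2*a+3) (2*a+2-(2*a+3)) = 0 from by omega]
          ring
        rw [hsum]
        by_cases ha : 1 ≤ a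
        · rw [if_pos (by simp only [Finset.mem_Icc]; omega : 2*a ∈ Finset.Icc 1 (2*a+1))]
          have c1 : ck (2*a) = (((a:ℕ):Ft) * (((a:ℕ):Ft) + 1) * (2 * ((a:ℕ):Ft) + 1) / 6) *
              genT 0 * genT 1 := by
            simp only [ck]
            rw [if_pos (by omega : (2*a) % 2 = 0), show (2*a)/2 = a by omega]
          have c2 : ck (2*a+2) = ((((a+1:ℕ)):Ft) * ((((a+1:ℕ)):Ft) + 1) *
              (2 * (((a+1:ℕ)):Ft) + 1) / 6) * genT 0 * genT 1 := by
            simp only [ck]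
            rw [if_pos (by omega : (2*a+2) % 2 = 0), show (2*a+2)/2 = a+1 by omega]
          rw [c1, c2]
          push_cast
          ring
        · obtain rfl : a = 0 := by omega
          rw [if_neg (by simp only [Finset.mem_Icc]; omega : ¬(2*0 ∈ Finset.Icc 1 (2*0+1)))]
          have c2 : ck (2*0+2) = genT 0 * genT 1 := by norm_num [ck]
          rw [c2]
          push_cast
          ring
      · rw [show 2*a+1+2 = 2*a+3 by omega, show 2*a+1+3 = 2*a+4 by omega,
          show 2*a+1+1 = 2*a+2 by omega]
        rw [if_pos (by omega : (2*a+3) % 2 = 1),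
          if_pos (by simp only [Finset.mem_Icc]; omega : 2*a+1 ∈ Finset.Icc 1 (2*a+2))]
        have hterm : ∀ k ∈ Finset.Icc 1 (2*a+4), ((min k (2*a+3-k):ℕ):Ft) * qq (m + k) *
            qq (m + ((2*a+4:ℕ):ℤ) - k)
            = ((min k (2*a+3-k):ℕ):Ft) * (if Odd (m + (k:ℕ)) then genT 0^2 else genT 1^2) := by
          intro k hk
          simp only [Finset.mem_Icc] at hk
          rw [mul_assoc, show qq (m + ((2*a+4:ℕ):ℤ) - (k:ℕ)) = qq (m + (k:ℕ))
            from qq_congr (by omega), qq_sq_ite]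
        rw [Finset.sum_congr rfl hterm]
        have hres : (∑ k ∈ Finset.Icc 1 (2*a+4), ((min k (2*a+3-k):ℕ):Ft) *
              (if Odd (m + (k:ℕ)) then genT 0^2 else genT 1^2))
            = ∑ k ∈ Finset.Icc 1 (2*a+2), ((min k (2*a+3-k):ℕ):Ft) *
              (if Odd (m + (k:ℕ)) then genT 0^2 else genT 1^2) :=
          (sum_Icc_top_ext (by omega) fun k hk1 hk2 => by
            rw [show min k (2*a+3-k) = 0 from by omega]; simp).symm
        rw [hres]
        have hswap : (∑ k ∈ Finset.Icc 1 (2*a+2), ((min k (2*a+3-k):ℕ):Ft) *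
              (if Odd (m + (k:ℕ)) then genT 0^2 else genT 1^2))
            = ∑ k ∈ Finset.Icc 1 (2*a+2), ((min k (2*a+3-k):ℕ):Ft) *
              (if Odd (m + (k:ℕ)) then genT 1^2 else genT 0^2) := by
          refine Finset.sum_nbij' (fun k => 2*a+3-k) (fun k => 2*a+3-k) ?_ ?_ ?_ ?_ ?_
          · intro x hx; simp only [Finset.mem_Icc] at *; omega
          · intro x hx; simp only [Finset.mem_Icc] at *; omega
          · intro x hx; show 2*a+3-(2*a+3-x) = x; simp only [Finset.mem_Icc] at hx; omega
          · intro x hx; show 2*a+3-(2*a+3-x) = x; simp only [Finset.mem_Icc] at hx; omega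
          · intro x hx
            simp only [Finset.mem_Icc] at hx
            show ((min x (2*a+3-x):ℕ):Ft) * (if Odd (m + (x:ℕ)) then genT 0^2 else genT 1^2)
              = ((min (2*a+3-x) (2*a+3-(2*a+3-x)):ℕ):Ft) *
                (if Odd (m + ((2*a+3-x:ℕ):ℤ)) then genT 1^2 else genT 0^2)
            rw [show min (2*a+3-x) (2*a+3-(2*a+3-x)) = min x (2*a+3-x) from by omega,
              show ((2*a+3-x:ℕ):ℤ) = 2*a+3-(x:ℕ) from by omega]
            by_cases ho : Odd (m + (x:ℕ))
            · rw [if_pos ho, if_neg (by rw [Int.odd_iff] at ho ⊢; omega :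
                ¬Odd (m + (2*a+3-(x:ℕ))))]
            · rw [if_neg ho, if_pos (by rw [Int.odd_iff] at ho ⊢; omega :
                Odd (m + (2*a+3-(x:ℕ))))]
        have h2s : (∑ k ∈ Finset.Icc 1 (2*a+2), ((min k (2*a+3-k):ℕ):Ft) *
              (if Odd (m + (k:ℕ)) then genT 0^2 else genT 1^2))
            + (∑ k ∈ Finset.Icc 1 (2*a+2), ((min k (2*a+3-k):ℕ):Ft) *
              (if Odd (m + (k:ℕ)) then genT 1^2 else genT 0^2))
            = (((a+1)*(a+2):ℕ):Ft) * (genT 0^2 + genT 1^2) := by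
          rw [← Finset.sum_add_distrib]
          have hterm2 : ∀ k ∈ Finset.Icc 1 (2*a+2),
              ((min k (2*a+3-k):ℕ):Ft) * (if Odd (m + (k:ℕ)) then genT 0^2 else genT 1^2)
              + ((min k (2*a+3-k):ℕ):Ft) * (if Odd (m + (k:ℕ)) then genT 1^2 else genT 0^2)
              = ((min k (2*a+3-k):ℕ):Ft) * (genT 0^2 + genT 1^2) := by
            intro k hk
            by_cases ho : Odd (m + (k:ℕ))
            · rw [if_pos ho, if_pos ho]; ring
            · rw [if_neg ho, if_neg ho]; ring
          rw [Finset.sum_congr rfl hterm2, ← Finset.sum_mul]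
          congr 1
          rw [← Nat.cast_sum]
          congr 1
          have t := TsumL (2*a+3)
          rw [show (2*a+3)/2 = a+1 by omega, show (2*a+3+1)/2 = a+2 by omega] at t
          have e := Finset.sum_Icc_succ_top (a := 1) (b := 2*a+2) (by omega)
            (fun k => min k (2*a+3-k))
          rw [show 2*a+2+1 = 2*a+3 by omega] at e
          rw [e] at t
          try simp only [] at t
          rw [show min (2*a+3) (2*a+3-(2*a+3)) = 0 from by omega] at t
          simpa using t
        have c1 : ck (2*a+1) = (((((a+1:ℕ)):Ft) - 1) * (((a+1:ℕ)):Ft) *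
              ((((a+1:ℕ)):Ft) + 1) / 6) * (genT 0 ^ 2 + genT 1 ^ 2) + (((a+1:ℕ)):Ft) := by
          simp only [ck]
          rw [if_neg (by omega : ¬(2*a+1) % 2 = 0), show (2*a+1+1)/2 = a+1 by omega]
        have c3 : ck (2*a+3) = (((((a+2:ℕ)):Ft) - 1) * (((a+2:ℕ)):Ft) *
              ((((a+2:ℕ)):Ft) + 1) / 6) * (genT 0 ^ 2 + genT 1 ^ 2) + (((a+2:ℕ)):Ft) := by
          simp only [ck]
          rw [if_neg (by omega : ¬(2*a+3) % 2 = 0), show (2*a+3+1)/2 = a+2 by omega]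
        rw [c1, c3]
        linear_combination (norm := (push_cast; ring1)) (1/2 : Ft) * h2s + (1/2 : Ft) * hswap
    -- final assembly
    linear_combination (norm := (push_cast; ring1)) Y m * hYlin + Zel Y * ih2 - ih1 + h6 +
      Zel Y * h1 + h2 + h3 + h5 - hF - h4 - hg + hCid


set_option maxHeartbeats 2000000 in
/-- the relations (ZY) and (YY) hold in `F̃` for all `m ∈ ℤ` and `n ≥ 1`. -/
theorem stmt_19 (Y : ℤ → Ft) (hY : IsDefSeq Y) (m : ℤ) (n : ℕ) (hn : 1 ≤ n) :
    Zn Y n * Y m = Y (m - n) + Y (m + n) +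
        ∑ k ∈ Finset.Icc 1 n, (k : Ft) * qq (m + k) * Zn Y (n - k) ∧
      Y m * Y (m + n) =
        Y (m + ((n / 2 : ℕ) : ℤ)) * Y (m + (((n + 1) / 2 : ℕ) : ℤ)) +
          (∑ k ∈ Finset.Icc 1 (n - 1), ((min k (n - k) : ℕ) : Ft) * qq (m + k) *
            Y (m + (n : ℤ) - k)) +
          ∑ k ∈ Finset.Icc 1 n, ck k * ZnI Y ((n : ℤ) - 1 - k) := by
  constructor
  · rw [ZYI hY m n hn]
    congr 1
    apply Finset.sum_congr rfl
    intro k hk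
    simp only [Finset.mem_Icc] at hk
    rw [show ((n:ℤ) - (k:ℕ)) = ((n - k : ℕ) : ℤ) by omega, ZnI_ofNat]
  · exact YYI hY m n hn
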